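/- arXiv:1204.0037 — 2 statements merged into one kernel-verified Lean document; each statement's English description precedes it below -/
import Mathlib

section
/- Let A be an ω-homogeneous structure in a countable signature whose finitely generated substructures are finite, and let ≺ be a linear ordering on A such that (A,≺) is also ω-homogeneous. Set H = Aut(A) and H_≺ = Aut(A,≺). If Age(A,≺) satisfies the Ramsey property, then the pointed H-flow (cl(H·≺), ≺) is universal among H-ambits whose distinguished point is fixed by H_≺: for every compact Hausdorff space X with a continuous H-action and a point x₀ ∈ X with dense orbit such that H_≺·x₀ = {x₀}, there is a continuous surjective H-equivariant map φ : cl(H·≺) → X with φ(≺) = x₀. -/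
/-!
The map `g • ≺ ↦ g • x₀` on the orbit `H • ≺` is well defined because `H_≺` fixes `x₀`.
If `g • ≺` and `h • ≺` agree on the finite substructure generated by a finite `E ⊆ A`, ordered
homogeneity gives `k ∈ H_≺` such that `g k h⁻¹` fixes `E` pointwise; as `X` is compact, the
elements of a small enough neighbourhood of `1` move every point of `X` within a given entourage,
so `g • x₀` and `h • x₀` are close. Hence the map is uniformly continuous for the product
uniformity of `2^(A×A)`, extends continuously to the orbit closure by completeness of `X`, is
equivariant there by density, and is onto because its image is compact and contains the dense
orbit of `x₀`.
-/

open FirstOrder FirstOrder.Language Topology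

universe u v w x

/-- The compact space of all (strict) linear orderings on `α`, viewed as a subspace of the
product space `Bool ^ (α × α)` (with `Bool` discrete). -/
abbrev LO (α : Type w) : Type w :=
  {r : α → α → Bool // IsStrictTotalOrder α (fun a b => r a b = true)}

/-- The natural action of a bijection on the space of linear orderings:
`a (g • r) b ↔ g⁻¹ a <_r g⁻¹ b`. -/
def permLO {α : Type w} (g : Equiv.Perm α) (r : LO α) : LO α :=
  ⟨fun a b => r.1 (g.symm a) (g.symm b), by
    haveI := r.2
    exact
      { trichotomous := fun a b hab hba => by
          rcases trichotomous_of (fun x y => r.1 x y = true) (g.symm a) (g.symm b) with h | h | h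
          · exact absurd h hab
          · exact g.symm.injective h
          · exact absurd h hba
        irrefl := fun a => irrefl_of (fun x y => r.1 x y = true) (g.symm a)
        trans := fun a b c hab hbc => trans_of (fun x y => r.1 x y = true) hab hbc }⟩

variable {L : FirstOrder.Language.{u, v}} {M : Type w} [L.Structure M]

/-- The automorphism group of a first-order structure. -/
instance autGroup : Group (M ≃[L] M) where
  mul f g := f.comp g
  one := Language.Equiv.refl L M
  inv f := f.symm
  mul_assoc _ _ _ := rfl
  one_mul := Language.Equiv.refl_comp
  mul_one := Language.Equiv.comp_refl
  inv_mul_cancel := Language.Equiv.symm_comp_self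

/-- The topology of pointwise convergence on the automorphism group of a structure. -/
instance autTopology : TopologicalSpace (M ≃[L] M) :=
  letI : TopologicalSpace M := ⊥
  TopologicalSpace.induced
    (fun g : M ≃[L] M => ((g : M → M), (g.symm : M → M))) inferInstance

/-- The orbit of a linear ordering under the full automorphism group `H = Aut(M)`. -/
def fullOrbitLO (L : FirstOrder.Language.{u, v}) (M : Type w) [L.Structure M] (r : LO M) :
    Set (LO M) :=
  Set.range fun g : M ≃[L] M => permLO g.toEquiv r

/-- The linearly ordered structure `(M, ≺)` is `ω`-homogeneous. -/
def OrdUltrahomogeneous (L : FirstOrder.Language.{u, v}) (M : Type w) [L.Structure M]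
    (prec : LO M) : Prop :=
  ∀ (S : L.Substructure M), S.FG → ∀ e : S ↪[L] M,
    (∀ x y : S, prec.1 x y = true ↔ prec.1 (e x) (e y) = true) →
    ∃ g : M ≃[L] M, (∀ a b : M, prec.1 (g a) (g b) = prec.1 a b) ∧ ∀ x : S, g x = e x

/-- `S'` is a copy of `S` in `(M, ≺)`: there is an isomorphism `S ≃ S'` preserving both the
structure and the ordering `≺`. -/
def OrdIsoCopy (L : FirstOrder.Language.{u, v}) (M : Type w) [L.Structure M] (prec : LO M)
    (S S' : L.Substructure M) : Prop :=
  ∃ φ : S ≃[L] S', ∀ x y : S, prec.1 x y = true ↔ prec.1 (φ x) (φ y) = true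

/-- The age of `(M, ≺)` satisfies the Ramsey property: for all finitely generated ordered
substructures `S ≤ T` of `(M, ≺)` and `k ≥ 2` there is a finitely generated substructure `C`
such that every `k`-colouring of the copies of `(S, ≺)` in `(C, ≺)` is constant on the copies of
`(S, ≺)` inside some copy of `(T, ≺)` in `(C, ≺)`. -/
def OrderedAgeRamsey (L : FirstOrder.Language.{u, v}) (M : Type w) [L.Structure M]
    (prec : LO M) : Prop :=
  ∀ S T : L.Substructure M, S.FG → T.FG →
    (∃ e : S ↪[L] T, ∀ x y : S, prec.1 x y = true ↔ prec.1 (e x) (e y) = true) →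
    ∀ k : ℕ, 2 ≤ k → ∃ C : L.Substructure M, C.FG ∧
      ∀ c : L.Substructure M → Fin k,
        ∃ T' : L.Substructure M, T' ≤ C ∧ OrdIsoCopy L M prec T T' ∧
          ∃ i : Fin k, ∀ S' : L.Substructure M, S' ≤ T' → OrdIsoCopy L M prec S S' → c S' = i

open Filter Set Uniformity

lemma exists_finite_eqOn_subset_of_mem_nhds {ι β : Type*} [TopologicalSpace β]
    [DiscreteTopology β] {p : ι → β} {s : Set (ι → β)} (hs : s ∈ 𝓝 p) :
    ∃ I : Set ι, I.Finite ∧ {q | EqOn q p I} ⊆ s := by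
  rw [nhds_pi] at hs
  obtain ⟨I, hI, t, ht, hts⟩ := Filter.mem_pi.1 hs
  exact ⟨I, hI, fun q hq => hts fun i hi => hq hi ▸ mem_of_mem_nhds (ht i)⟩

lemma eventually_forall_smul_mem_of_mem_uniformity {G X : Type*} [Monoid G] [TopologicalSpace G]
    [UniformSpace X] [CompactSpace X] [MulAction G X] [ContinuousSMul G X]
    {W : Set (X × X)} (hW : W ∈ 𝓤 X) : ∀ᶠ g in 𝓝 (1 : G), ∀ x : X, (g • x, x) ∈ W := by
  have hclose (x : X) : ∀ᶠ p : G × X in 𝓝 (1, x), (p.1 • p.2, p.2) ∈ W := by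
    have h := (continuous_smul.prodMk continuous_snd).tendsto ((1 : G), x)
    rw [one_smul] at h
    exact h (nhds_le_uniformity x hW)
  simpa using isCompact_univ.eventually_forall_of_forall_eventually fun x _ => hclose x

section Extension

variable {Y X : Type*} [TopologicalSpace Y] [UniformSpace X] {A : Set Y} {f : Y → X}

lemma continuousOn_extendFrom_of_cauchy [CompleteSpace X]
    (hf : ∀ y ∈ closure A, Cauchy (map f (𝓝[A] y))) :
    ContinuousOn (extendFrom A f) (closure A) :=
  continuousOn_extendFrom subset_rfl fun y hy => CompleteSpace.complete (hf y hy)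

lemma extendFrom_eq_self_of_cauchy [T2Space X] {y : Y} (hy : y ∈ A)
    (hf : Cauchy (map f (𝓝[A] y))) : extendFrom A f y = f y :=
  extendFrom_eq (subset_closure hy) <| le_nhds_of_cauchy_adhp hf <|
    (ClusterPt.of_le_nhds (pure_le_nhds (f y))).mono (map_mono (pure_le_nhdsWithin hy))

end Extension

namespace LO

variable {α : Type w}

def AgreeOn (G : Set α) (r s : LO α) : Prop :=
  ∀ a ∈ G, ∀ b ∈ G, r.1 a b = s.1 a b

lemma isClosed_setOf_isStrictTotalOrder :
    IsClosed {r : α → α → Bool | IsStrictTotalOrder α fun a b => r a b = true} := by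
  have hchar : {r : α → α → Bool | IsStrictTotalOrder α fun a b => r a b = true} =
      (⋂ a, {r | ¬ r a a = true}) ∩
      (⋂ a, ⋂ b, ⋂ c, {r | r a b = true → r b c = true → r a c = true}) ∩
      ⋂ a, ⋂ b, {r | ¬ r a b = true → ¬ r b a = true → a = b} := by
    ext r
    simp only [mem_ofPred_eq, mem_inter_iff, mem_iInter]
    constructor
    · intro h
      exact ⟨⟨h.irrefl, fun a b c => h.trans a b c⟩, fun a b => h.trichotomous a b⟩
    · rintro ⟨⟨hirr, htrans⟩, htri⟩
      exact { irrefl := hirr, trans := htrans, trichotomous := htri }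
  rw [hchar]
  refine .inter (.inter ?_ ?_) ?_
  · exact isClosed_iInter fun a => (isClosed_discrete {x : Bool | ¬ x = true}).preimage
      (f := fun r : α → α → Bool => r a a) (by fun_prop)
  · exact isClosed_iInter fun a => isClosed_iInter fun b => isClosed_iInter fun c =>
      (isClosed_discrete {p : Bool × Bool × Bool | p.1 = true → p.2.1 = true → p.2.2 = true}
        ).preimage (f := fun r : α → α → Bool => (r a b, r b c, r a c)) (by fun_prop)
  · exact isClosed_iInter fun a => isClosed_iInter fun b =>
      (isClosed_discrete {p : Bool × Bool | ¬ p.1 = true → ¬ p.2 = true → a = b}).preimage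
        (f := fun r : α → α → Bool => (r a b, r b a)) (by fun_prop)

instance : CompactSpace (LO α) :=
  isCompact_iff_compactSpace.mp isClosed_setOf_isStrictTotalOrder.isCompact

lemma continuous_eval (a b : α) : Continuous fun r : LO α => r.1 a b :=
  (continuous_apply b).comp ((continuous_apply a).comp continuous_subtype_val)

lemma continuous_permLO (g : Equiv.Perm α) : Continuous (permLO g) :=
  .subtype_mk (continuous_pi fun a => continuous_pi fun b =>
    continuous_eval (g.symm a) (g.symm b)) _

lemma setOf_agreeOn_mem_nhds (r : LO α) {G : Set α} (hG : G.Finite) :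
    {s | AgreeOn G s r} ∈ 𝓝 r := by
  have hcoord (a b : α) : ∀ᶠ s in 𝓝 r, s.1 a b = r.1 a b :=
    (continuous_eval a b).continuousAt.eventually_mem (s := {r.1 a b})
      (mem_nhds_discrete.2 rfl)
  exact (eventually_all_finite hG).2 fun a _ => (eventually_all_finite hG).2 fun b _ => hcoord a b

end LO

@[simp]
lemma permLO_toEquiv_apply (g : M ≃[L] M) (r : LO M) (a b : M) :
    (permLO g.toEquiv r).1 a b = r.1 (g.symm a) (g.symm b) :=
  rfl

@[simp]
lemma autGroup_mul_apply (g h : M ≃[L] M) (a : M) : (g * h) a = g (h a) :=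
  rfl

@[simp]
lemma autGroup_inv_apply (g : M ≃[L] M) (a : M) : g⁻¹ a = g.symm a :=
  rfl

lemma exists_finite_fixing_subset_of_mem_nhds_one {U : Set (M ≃[L] M)} (hU : U ∈ 𝓝 1) :
    ∃ E : Set M, E.Finite ∧ ∀ v : M ≃[L] M, (∀ a ∈ E, v a = a) → v ∈ U := by
  let _ : TopologicalSpace M := ⊥
  have : DiscreteTopology M := ⟨rfl⟩
  rw [nhds_induced, nhds_prod_eq] at hU
  obtain ⟨t, ht, htU⟩ := mem_comap.1 hU
  obtain ⟨t₁, ht₁, t₂, ht₂, ht⟩ := mem_prod_iff.1 ht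
  obtain ⟨E₁, hE₁, hE₁t⟩ := exists_finite_eqOn_subset_of_mem_nhds ht₁
  obtain ⟨E₂, hE₂, hE₂t⟩ := exists_finite_eqOn_subset_of_mem_nhds ht₂
  refine ⟨E₁ ∪ E₂, hE₁.union hE₂, fun v hv =>
    htU (ht ⟨hE₁t fun a ha => hv a (.inl ha), hE₂t fun a ha => ?_⟩)⟩
  show v.symm a = a
  exact v.injective ((v.apply_symm_apply a).trans (hv a (.inr ha)).symm)

lemma OrdUltrahomogeneous.exists_extend_of_preserving {prec : LO M}
    (hohom : OrdUltrahomogeneous L M prec) {S : L.Substructure M} (hS : S.FG) (u : M ≃[L] M)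
    (hu : ∀ x ∈ S, ∀ y ∈ S, prec.1 (u x) (u y) = prec.1 x y) :
    ∃ k : M ≃[L] M, (∀ a b, prec.1 (k a) (k b) = prec.1 a b) ∧ ∀ x ∈ S, k x = u x := by
  obtain ⟨k, hk, hkS⟩ := hohom S hS (u.toEmbedding.comp S.subtype) fun x y => by
    simp [hu x x.2 y y.2]
  exact ⟨k, hk, fun x hx => hkS ⟨x, hx⟩⟩

lemma permLO_mem_fullOrbitLO (prec : LO M) (g : M ≃[L] M) :
    permLO g.toEquiv prec ∈ fullOrbitLO L M prec :=
  ⟨g, rfl⟩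

section OrbitMap

variable {X : Type*} [MulAction (M ≃[L] M) X]

variable (L) in
/-- `g • ≺ ↦ g • x₀`; the value `x₀` off the orbit `H • ≺` is a placeholder. -/
noncomputable def orbitMap (prec : LO M) (x₀ : X) : LO M → X :=
  Function.extend (fun g : M ≃[L] M => permLO g.toEquiv prec) (· • x₀) fun _ => x₀

variable {prec : LO M} {x₀ : X}
  (hfix : ∀ g : M ≃[L] M, (∀ a b : M, prec.1 (g a) (g b) = prec.1 a b) → g • x₀ = x₀)
include hfix

lemma orbitMap_permLO (g : M ≃[L] M) :
    orbitMap L prec x₀ (permLO g.toEquiv prec) = g • x₀ := by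
  refine Function.FactorsThrough.extend_apply (fun g h hgh => ?_) _ g
  have hpres : ∀ a b, prec.1 ((h⁻¹ * g) a) ((h⁻¹ * g) b) = prec.1 a b := fun a b => by
    simpa using congrArg (fun r : LO M => r.1 (g a) (g b)) hgh.symm
  rw [← inv_smul_eq_iff, ← mul_smul, hfix _ hpres]

end OrbitMap

section Universality

variable {X : Type*} [UniformSpace X] [CompactSpace X] [MulAction (M ≃[L] M) X]
  [ContinuousSMul (M ≃[L] M) X] {prec : LO M} {x₀ : X}
  (hfin : ∀ S : L.Substructure M, S.FG → Finite S) (hohom : OrdUltrahomogeneous L M prec)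
  (hfix : ∀ g : M ≃[L] M, (∀ a b : M, prec.1 (g a) (g b) = prec.1 a b) → g • x₀ = x₀)
include hfin hohom hfix

lemma exists_finite_agreeOn_smul_mem_uniformity {W : Set (X × X)} (hW : W ∈ 𝓤 X) :
    ∃ G : Set M, G.Finite ∧ ∀ g h : M ≃[L] M,
      LO.AgreeOn G (permLO g.toEquiv prec) (permLO h.toEquiv prec) → (g • x₀, h • x₀) ∈ W := by
  obtain ⟨E, hE, hEW⟩ := exists_finite_fixing_subset_of_mem_nhds_one
    (eventually_forall_smul_mem_of_mem_uniformity (G := M ≃[L] M) hW)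
  have hS : (Substructure.closure L E).FG := Substructure.fg_closure hE
  refine ⟨Substructure.closure L E, Set.finite_coe_iff.1 (hfin _ hS), fun g h hgh => ?_⟩
  obtain ⟨k, hk, hku⟩ := hohom.exists_extend_of_preserving (hS.map h.symm.toHom) (g⁻¹ * h) (by
    rintro _ ⟨a, ha, rfl⟩ _ ⟨b, hb, rfl⟩
    simpa [LO.AgreeOn] using hgh a ha b hb)
  have hv : ∀ a ∈ E, (g * k * h⁻¹) a = a := fun a ha => by
    simp [hku (h.symm a) ⟨a, Substructure.subset_closure ha, rfl⟩]
  simpa [mul_smul, hfix k hk] using hEW _ hv (h • x₀)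

lemma cauchy_map_orbitMap_nhdsWithin {r : LO M} (hr : r ∈ closure (fullOrbitLO L M prec)) :
    Cauchy (map (orbitMap L prec x₀) (𝓝[fullOrbitLO L M prec] r)) := by
  refine cauchy_map_iff.2 ⟨mem_closure_iff_nhdsWithin_neBot.1 hr, fun W hW => ?_⟩
  obtain ⟨G, hG, hGW⟩ := exists_finite_agreeOn_smul_mem_uniformity hfin hohom hfix hW
  have hN : fullOrbitLO L M prec ∩ {s | LO.AgreeOn G s r} ∈ 𝓝[fullOrbitLO L M prec] r :=
    inter_mem_nhdsWithin _ (LO.setOf_agreeOn_mem_nhds r hG)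
  refine mem_map.2 (mem_of_superset (prod_mem_prod hN hN) ?_)
  rintro ⟨_, _⟩ ⟨⟨⟨g, rfl⟩, hg⟩, ⟨h, rfl⟩, hh⟩
  simp only [mem_preimage, orbitMap_permLO hfix]
  exact hGW g h fun a ha b hb => (hg a ha b hb).trans (hh a ha b hb).symm

lemma continuousOn_extendFrom_orbitMap :
    ContinuousOn (extendFrom (fullOrbitLO L M prec) (orbitMap L prec x₀))
      (closure (fullOrbitLO L M prec)) :=
  continuousOn_extendFrom_of_cauchy fun _ hr => cauchy_map_orbitMap_nhdsWithin hfin hohom hfix hr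

lemma extendFrom_orbitMap_permLO [T2Space X] (g : M ≃[L] M) :
    extendFrom (fullOrbitLO L M prec) (orbitMap L prec x₀) (permLO g.toEquiv prec) = g • x₀ :=
  (extendFrom_eq_self_of_cauchy (permLO_mem_fullOrbitLO prec g) (cauchy_map_orbitMap_nhdsWithin
    hfin hohom hfix (subset_closure (permLO_mem_fullOrbitLO prec g)))).trans
    (orbitMap_permLO hfix g)

lemma extendFrom_orbitMap_permLO_of_mem_closure [T2Space X] (g : M ≃[L] M) {r : LO M}
    (hr : r ∈ closure (fullOrbitLO L M prec)) :
    extendFrom (fullOrbitLO L M prec) (orbitMap L prec x₀) (permLO g.toEquiv r) =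
      g • extendFrom (fullOrbitLO L M prec) (orbitMap L prec x₀) r := by
  have hF := continuousOn_extendFrom_orbitMap hfin hohom hfix
  have hmaps : MapsTo (permLO g.toEquiv) (closure (fullOrbitLO L M prec))
      (closure (fullOrbitLO L M prec)) :=
    MapsTo.closure (by rintro _ ⟨h, rfl⟩; exact permLO_mem_fullOrbitLO prec (g * h))
      (LO.continuous_permLO _)
  refine EqOn.of_subset_closure ?_ (hF.comp (LO.continuous_permLO _).continuousOn hmaps)
    ((continuous_const_smul g).comp_continuousOn hF) subset_closure subset_rfl hr
  rintro _ ⟨h, rfl⟩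
  change extendFrom _ _ (permLO (g * h).toEquiv prec) = g • extendFrom _ _ (permLO h.toEquiv prec)
  rw [extendFrom_orbitMap_permLO hfin hohom hfix, extendFrom_orbitMap_permLO hfin hohom hfix,
    mul_smul]

lemma surjOn_extendFrom_orbitMap [T2Space X] (hdense : Dense (MulAction.orbit (M ≃[L] M) x₀)) :
    SurjOn (extendFrom (fullOrbitLO L M prec) (orbitMap L prec x₀))
      (closure (fullOrbitLO L M prec)) univ := by
  have hclosed : IsClosed (extendFrom _ (orbitMap L prec x₀) '' closure (fullOrbitLO L M prec)) :=
    (isClosed_closure.isCompact.image_of_continuousOn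
      (continuousOn_extendFrom_orbitMap hfin hohom hfix)).isClosed
  refine fun x _ => hclosed.closure_subset_iff.2 ?_ (hdense x)
  rintro _ ⟨g, rfl⟩
  exact ⟨_, subset_closure (permLO_mem_fullOrbitLO prec g),
    extendFrom_orbitMap_permLO hfin hohom hfix g⟩

end Universality

theorem orbit_closure_universal_ambit_general
    (hfin : ∀ S : L.Substructure M, S.FG → Finite S)
    (prec : LO M) (hohom : OrdUltrahomogeneous L M prec)
    (X : Type x) [TopologicalSpace X] [CompactSpace X] [T2Space X]
    [MulAction (M ≃[L] M) X] [ContinuousSMul (M ≃[L] M) X]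
    (x₀ : X) (hdense : Dense (MulAction.orbit (M ≃[L] M) x₀))
    (hfix : ∀ g : M ≃[L] M, (∀ a b : M, prec.1 (g a) (g b) = prec.1 a b) → g • x₀ = x₀) :
    ∃ φ : closure (fullOrbitLO L M prec) → X,
      Continuous φ ∧ Function.Surjective φ ∧
      (∀ (g : M ≃[L] M) (r : LO M) (hr : r ∈ closure (fullOrbitLO L M prec))
          (hgr : permLO g.toEquiv r ∈ closure (fullOrbitLO L M prec)),
        φ ⟨permLO g.toEquiv r, hgr⟩ = g • φ ⟨r, hr⟩) ∧
      ∀ hp : prec ∈ closure (fullOrbitLO L M prec), φ ⟨prec, hp⟩ = x₀ := by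
  let _ : UniformSpace X := uniformSpaceOfCompactR1
  refine ⟨(closure _).domRestrict (extendFrom _ (orbitMap L prec x₀)),
    (continuousOn_extendFrom_orbitMap hfin hohom hfix).domRestrict,
    surjOn_iff_surjective.1 (surjOn_extendFrom_orbitMap hfin hohom hfix hdense),
    fun g r hr _ => extendFrom_orbitMap_permLO_of_mem_closure hfin hohom hfix g hr,
    fun _ => (extendFrom_orbitMap_permLO hfin hohom hfix 1).trans (one_smul _ x₀)⟩

/-- Kechris–Pestov–Todorcevic universality: if `(A, ≺)` is an `ω`-homogeneous linearly ordered
structure (over an `ω`-homogeneous `A`) whose finitely generated substructures are finite and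
whose age satisfies the Ramsey property, then the pointed flow `(cl(H·≺), ≺)` is universal
among `H`-ambits whose base point is fixed by `H_≺ = Aut(A, ≺)`, where `H = Aut(A)`. -/
theorem orbit_closure_universal_ambit (hL : L.card ≤ Cardinal.aleph0)
    (hhom : L.IsUltrahomogeneous M)
    (hfin : ∀ S : L.Substructure M, S.FG → Finite S)
    (prec : LO M) (hohom : OrdUltrahomogeneous L M prec)
    (hramsey : OrderedAgeRamsey L M prec)
    (X : Type x) [TopologicalSpace X] [CompactSpace X] [T2Space X] [Nonempty X]
    [MulAction (M ≃[L] M) X] [ContinuousSMul (M ≃[L] M) X]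
    (x₀ : X) (hdense : Dense (MulAction.orbit (M ≃[L] M) x₀))
    (hfix : ∀ g : M ≃[L] M, (∀ a b : M, prec.1 (g a) (g b) = prec.1 a b) → g • x₀ = x₀) :
    ∃ φ : closure (fullOrbitLO L M prec) → X,
      Continuous φ ∧ Function.Surjective φ ∧
      (∀ (g : M ≃[L] M) (r : LO M) (hr : r ∈ closure (fullOrbitLO L M prec))
          (hgr : permLO g.toEquiv r ∈ closure (fullOrbitLO L M prec)),
        φ ⟨permLO g.toEquiv r, hgr⟩ = g • φ ⟨r, hr⟩) ∧
      ∀ hp : prec ∈ closure (fullOrbitLO L M prec), φ ⟨prec, hp⟩ = x₀ :=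
  orbit_closure_universal_ambit_general hfin prec hohom X x₀ hdense hfix
end

section
/- For every n ∈ ℕ, the class of K_n-free simple graphs (of arbitrary cardinality) has the amalgamation property: given K_n-free graphs A, B, C and graph embeddings f : A → B and g : A → C, the free amalgam D (the quotient of the disjoint union of B and C identifying f(a) with g(a) for a ∈ A, with adjacency the union of the adjacencies of B and C) is K_n-free, and the canonical embeddings k : B → D, l : C → D satisfy k ∘ f = l ∘ g. -/
/-!
A retraction of the amalgam onto `β ⊕ γ` that sends `g a` to `f a` shows that `β` embeds, and
swapping the roles of `B` and `C` shows that `γ` does. A clique of the amalgam lies entirely in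
the copy of `B` or entirely in the copy of `C`: a vertex outside the copy of `C` is adjacent only
along edges of `B`, which drags every other vertex of the clique into the copy of `B`. Both copies
are induced, so the clique pulls back to a clique of `B` or of `C`.
-/

universe u v w

/-- The relation on the disjoint union of `β` and `γ` identifying `f a` with `g a` for `a : α`. -/
def amalgRel {α : Type u} {β : Type v} {γ : Type w} (f : α → β) (g : α → γ) :
    β ⊕ γ → β ⊕ γ → Prop := fun x y =>
  x = y ∨ (∃ a, x = Sum.inl (f a) ∧ y = Sum.inr (g a)) ∨
    (∃ a, x = Sum.inr (g a) ∧ y = Sum.inl (f a))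

/-- The amalgamated set: the quotient of the disjoint union of `β` and `γ` identifying
`f a` with `g a` for each `a : α`. -/
def Amalg {α : Type u} {β : Type v} {γ : Type w} (f : α → β) (g : α → γ) :
    Type (max v w) := Quot (amalgRel f g)

/-- The canonical map `β → Amalg f g`. -/
def amalgInl {α : Type u} {β : Type v} {γ : Type w} (f : α → β) (g : α → γ) (b : β) :
    Amalg f g := Quot.mk _ (Sum.inl b)

/-- The canonical map `γ → Amalg f g`. -/
def amalgInr {α : Type u} {β : Type v} {γ : Type w} (f : α → β) (g : α → γ) (c : γ) :
    Amalg f g := Quot.mk _ (Sum.inr c)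

/-- The adjacency relation of the free amalgam: two vertices are adjacent if and only if their
preimages are adjacent in `B` or adjacent in `C`. -/
def amalgAdj {α : Type u} {β : Type v} {γ : Type w} (f : α → β) (g : α → γ)
    (B : SimpleGraph β) (C : SimpleGraph γ) : Amalg f g → Amalg f g → Prop := fun x y =>
  (∃ b b', x = amalgInl f g b ∧ y = amalgInl f g b' ∧ B.Adj b b') ∨
    (∃ c c', x = amalgInr f g c ∧ y = amalgInr f g c' ∧ C.Adj c c')

open Function

theorem SimpleGraph.not_cliqueFree_of_pairwise_adj {V : Type*} {G : SimpleGraph V} {n : ℕ}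
    {t : Fin n → V} (ht : Pairwise (G.Adj on t)) : ¬ G.CliqueFree n :=
  let φ : (⊤ : SimpleGraph (Fin n)) →g G := ⟨t, fun h => ht h⟩
  SimpleGraph.IsContained.not_cliqueFree ⟨φ.toCopy φ.injective_of_top_hom⟩

section Amalg

variable {α : Type u} {β : Type v} {γ : Type w} {f : α → β} {g : α → γ}
  {B : SimpleGraph β} {C : SimpleGraph γ}

theorem amalgInl_eq_amalgInr (a : α) : amalgInl f g (f a) = amalgInr f g (g a) :=
  Quot.sound (Or.inr (Or.inl ⟨a, rfl, rfl⟩))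

theorem exists_amalgInl_or_amalgInr (x : Amalg f g) :
    (∃ b, amalgInl f g b = x) ∨ ∃ c, amalgInr f g c = x := by
  obtain ⟨b | c, rfl⟩ := Quot.exists_rep x
  exacts [Or.inl ⟨b, rfl⟩, Or.inr ⟨c, rfl⟩]

theorem amalgAdj.symm {x y : Amalg f g} (h : amalgAdj f g B C x y) : amalgAdj f g B C y x := by
  rcases h with ⟨b, b', rfl, rfl, h⟩ | ⟨c, c', rfl, rfl, h⟩
  exacts [Or.inl ⟨b', b, rfl, rfl, h.symm⟩, Or.inr ⟨c', c, rfl, rfl, h.symm⟩]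

variable (f g) in
def amalgSwap : Amalg f g → Amalg g f :=
  Quot.map Sum.swap <| by
    rintro x y (rfl | ⟨a, rfl, rfl⟩ | ⟨a, rfl, rfl⟩)
    exacts [Or.inl rfl, Or.inr (Or.inr ⟨a, rfl, rfl⟩), Or.inr (Or.inl ⟨a, rfl, rfl⟩)]

theorem amalgSwap_amalgInr (c : γ) : amalgSwap f g (amalgInr f g c) = amalgInl g f c := rfl

theorem amalgAdj.amalgSwap {x y : Amalg f g} (h : amalgAdj f g B C x y) :
    amalgAdj g f C B (amalgSwap f g x) (amalgSwap f g y) := by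
  rcases h with ⟨b, b', rfl, rfl, h⟩ | ⟨c, c', rfl, rfl, h⟩
  exacts [Or.inr ⟨b, b', rfl, rfl, h⟩, Or.inl ⟨c, c', rfl, rfl, h⟩]

variable (f) in
/-- The normal form of a vertex: its representative in `β` when it has one. -/
noncomputable def amalgRetract (hg : Injective g) : Amalg f g → β ⊕ γ :=
  Quot.lift (Sum.elim Sum.inl (extend g (Sum.inl ∘ f) Sum.inr)) <| by
    rintro x y (rfl | ⟨a, rfl, rfl⟩ | ⟨a, rfl, rfl⟩)
    exacts [rfl, (hg.extend_apply (Sum.inl ∘ f) Sum.inr a).symm,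
      hg.extend_apply (Sum.inl ∘ f) Sum.inr a]

theorem amalgRetract_amalgInl (hg : Injective g) (b : β) :
    amalgRetract f hg (amalgInl f g b) = Sum.inl b := rfl

theorem amalgRetract_amalgInr_of_notMem (hg : Injective g) {c : γ} (hc : c ∉ Set.range g) :
    amalgRetract f hg (amalgInr f g c) = Sum.inr c :=
  extend_apply' _ _ c hc

theorem amalgInl_injective (hg : Injective g) : Injective (amalgInl f g) :=
  fun b b' h => Sum.inl_injective <| by
    rw [← amalgRetract_amalgInl hg, h, amalgRetract_amalgInl]

theorem exists_of_amalgInl_eq_amalgInr (hg : Injective g) {b : β} {c : γ}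
    (h : amalgInl f g b = amalgInr f g c) : ∃ a, f a = b ∧ g a = c := by
  by_cases hc : c ∈ Set.range g
  · obtain ⟨a, rfl⟩ := hc
    exact ⟨a, amalgInl_injective hg (by rw [h, amalgInl_eq_amalgInr]), rfl⟩
  · have := amalgRetract_amalgInr_of_notMem (f := f) hg hc
    rw [← h, amalgRetract_amalgInl] at this
    exact absurd this Sum.inl_ne_inr

theorem amalgInr_injective (hf : Injective f) : Injective (amalgInr f g) :=
  fun c c' h => amalgInl_injective hf <| by
    rw [← amalgSwap_amalgInr, h, amalgSwap_amalgInr]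

theorem amalgAdj_irrefl (hf : Injective f) (hg : Injective g) (x : Amalg f g) :
    ¬ amalgAdj f g B C x x := by
  rintro (⟨b, b', rfl, h, hb⟩ | ⟨c, c', rfl, h, hc⟩)
  · exact hb.ne (amalgInl_injective hg h)
  · exact hc.ne (amalgInr_injective hf h)

theorem amalgAdj_amalgInl_iff (hg : Injective g)
    (hgf : ∀ a a', C.Adj (g a) (g a') → B.Adj (f a) (f a')) {b b' : β} :
    amalgAdj f g B C (amalgInl f g b) (amalgInl f g b') ↔ B.Adj b b' := by
  refine ⟨?_, fun h => Or.inl ⟨b, b', rfl, rfl, h⟩⟩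
  rintro (⟨b₁, b₂, h₁, h₂, h⟩ | ⟨c₁, c₂, h₁, h₂, h⟩)
  · rwa [amalgInl_injective hg h₁, amalgInl_injective hg h₂]
  · obtain ⟨a₁, rfl, rfl⟩ := exists_of_amalgInl_eq_amalgInr hg h₁
    obtain ⟨a₂, rfl, rfl⟩ := exists_of_amalgInl_eq_amalgInr hg h₂
    exact hgf a₁ a₂ h

theorem amalgAdj_amalgInr_iff (hf : Injective f)
    (hfg : ∀ a a', B.Adj (f a) (f a') → C.Adj (g a) (g a')) {c c' : γ} :
    amalgAdj f g B C (amalgInr f g c) (amalgInr f g c') ↔ C.Adj c c' :=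
  ⟨fun h => (amalgAdj_amalgInl_iff hf hfg).1 h.amalgSwap, fun h => Or.inr ⟨c, c', rfl, rfl, h⟩⟩

theorem pairwise_amalgAdj_cases {ι : Type*} {s : ι → Amalg f g}
    (hs : Pairwise (amalgAdj f g B C on s)) :
    (∀ i, ∃ b, amalgInl f g b = s i) ∨ ∀ i, ∃ c, amalgInr f g c = s i := by
  refine or_iff_not_imp_right.2 fun hnot => ?_
  push Not at hnot
  obtain ⟨i₀, hi₀⟩ := hnot
  intro i
  obtain rfl | hi := eq_or_ne i₀ i
  · exact (exists_amalgInl_or_amalgInr (s i₀)).resolve_right (not_exists.2 hi₀)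
  · rcases hs hi with ⟨-, b, -, h, -⟩ | ⟨c, -, h, -, -⟩
    exacts [⟨b, h.symm⟩, absurd h.symm (hi₀ c)]

theorem not_pairwise_amalgAdj {n : ℕ} (hf : Injective f) (hg : Injective g)
    (hfg : ∀ a a', B.Adj (f a) (f a') → C.Adj (g a) (g a'))
    (hgf : ∀ a a', C.Adj (g a) (g a') → B.Adj (f a) (f a'))
    (hB : B.CliqueFree n) (hC : C.CliqueFree n) (s : Fin n → Amalg f g) :
    ¬ Pairwise (amalgAdj f g B C on s) := by
  intro hs
  rcases pairwise_amalgAdj_cases hs with h | h <;> choose t ht using h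
  · refine SimpleGraph.not_cliqueFree_of_pairwise_adj (t := t) (fun i j hij => ?_) hB
    exact (amalgAdj_amalgInl_iff hg hgf).1 (by simpa only [onFun, ht] using hs hij)
  · refine SimpleGraph.not_cliqueFree_of_pairwise_adj (t := t) (fun i j hij => ?_) hC
    exact (amalgAdj_amalgInr_iff hf hfg).1 (by simpa only [onFun, ht] using hs hij)

end Amalg

theorem knFree_free_amalgamation_general {α : Type u} {β : Type v} {γ : Type w} (n : ℕ)
    (A : SimpleGraph α) (B : SimpleGraph β) (C : SimpleGraph γ)
    (hB : B.CliqueFree n) (hC : C.CliqueFree n)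
    (f : α → β) (hf : Function.Injective f) (hfe : ∀ x y : α, B.Adj (f x) (f y) ↔ A.Adj x y)
    (g : α → γ) (hg : Function.Injective g) (hge : ∀ x y : α, C.Adj (g x) (g y) ↔ A.Adj x y) :
    Symmetric (amalgAdj f g B C) ∧ Irreflexive (amalgAdj f g B C) ∧
    (¬ ∃ φ : Fin n → Amalg f g, Function.Injective φ ∧
      ∀ i j : Fin n, i ≠ j → amalgAdj f g B C (φ i) (φ j)) ∧
    Function.Injective (amalgInl f g) ∧
    (∀ b b' : β, amalgAdj f g B C (amalgInl f g b) (amalgInl f g b') ↔ B.Adj b b') ∧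
    Function.Injective (amalgInr f g) ∧
    (∀ c c' : γ, amalgAdj f g B C (amalgInr f g c) (amalgInr f g c') ↔ C.Adj c c') ∧
    (∀ a : α, amalgInl f g (f a) = amalgInr f g (g a)) := by
  have hfg : ∀ a a', B.Adj (f a) (f a') → C.Adj (g a) (g a') := fun a a' h =>
    (hge a a').2 ((hfe a a').1 h)
  have hgf : ∀ a a', C.Adj (g a) (g a') → B.Adj (f a) (f a') := fun a a' h =>
    (hfe a a').2 ((hge a a').1 h)
  exact ⟨fun _ _ h => h.symm, amalgAdj_irrefl hf hg,
    fun ⟨φ, _, hφ⟩ => not_pairwise_amalgAdj hf hg hfg hgf hB hC φ fun i j => hφ i j,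
    amalgInl_injective hg, fun _ _ => amalgAdj_amalgInl_iff hg hgf,
    amalgInr_injective hf, fun _ _ => amalgAdj_amalgInr_iff hf hfg, amalgInl_eq_amalgInr⟩

/-- For every `n`, the class of `K_n`-free simple graphs has the amalgamation property: the
free amalgam of `K_n`-free graphs over graph embeddings `f : A → B`, `g : A → C` is a
`K_n`-free simple graph, and the canonical maps `k : B → D`, `l : C → D` are graph embeddings
with `k ∘ f = l ∘ g`. -/
theorem knFree_free_amalgamation {α : Type u} {β : Type v} {γ : Type w} (n : ℕ)
    (A : SimpleGraph α) (B : SimpleGraph β) (C : SimpleGraph γ)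
    (hA : A.CliqueFree n) (hB : B.CliqueFree n) (hC : C.CliqueFree n)
    (f : α → β) (hf : Function.Injective f) (hfe : ∀ x y : α, B.Adj (f x) (f y) ↔ A.Adj x y)
    (g : α → γ) (hg : Function.Injective g) (hge : ∀ x y : α, C.Adj (g x) (g y) ↔ A.Adj x y) :
    Symmetric (amalgAdj f g B C) ∧ Irreflexive (amalgAdj f g B C) ∧
    (¬ ∃ φ : Fin n → Amalg f g, Function.Injective φ ∧
      ∀ i j : Fin n, i ≠ j → amalgAdj f g B C (φ i) (φ j)) ∧
    Function.Injective (amalgInl f g) ∧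
    (∀ b b' : β, amalgAdj f g B C (amalgInl f g b) (amalgInl f g b') ↔ B.Adj b b') ∧
    Function.Injective (amalgInr f g) ∧
    (∀ c c' : γ, amalgAdj f g B C (amalgInr f g c) (amalgInr f g c') ↔ C.Adj c c') ∧
    (∀ a : α, amalgInl f g (f a) = amalgInr f g (g a)) :=
  knFree_free_amalgamation_general n A B C hB hC f hf hfe g hg hge
end
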